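/- Let V be a real Hilbert space, a : V × V → ℝ bilinear, bounded with constant M, coercive with constant γ, ℓ ∈ V*, and u* the Lax–Milgram solution of a(u*,·) = ℓ. Let {φ_k} be an orthonormal basis of V and define the truncated loss L_N(u) = Σ_{k=1}^N |a(u,φ_k) − ℓ(φ_k)|². Then for every u ∈ V, L_N(u) ≤ M² ‖u − u*‖²_V, and L_N(u) → ‖R(u)‖²_{V*} ≥ γ² ‖u − u*‖²_V as N → ∞. In particular, if a sequence u_m satisfies ‖R(u_m)‖_{V*} → 0, then u_m → u* in V. -/

import Mathlib

/-!
Since `a(u*, ·) = ℓ`, the residual is `R(u) = a(u − u*, ·)`, so boundedness and coercivity of `a`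
squeeze `‖R(u)‖` between `γ‖u − u*‖` and `M‖u − u*‖`. The truncated loss is a partial sum of
Parseval's expansion of the Riesz representative of `R(u)` in the basis `φ`, hence tends to
`‖R(u)‖²` from below.
-/

open Filter

/-- By Riesz, `f = ⟪w, ·⟫` with `‖w‖ = ‖f‖`; this is Parseval's identity for `w`. -/
theorem HilbertBasis.hasSum_apply_sq {ι E : Type*} [NormedAddCommGroup E]
    [InnerProductSpace ℝ E] [CompleteSpace E] (b : HilbertBasis ι ℝ E) (f : E →L[ℝ] ℝ) :
    HasSum (fun i => f (b i) ^ 2) (‖f‖ ^ 2) := by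
  set w := (InnerProductSpace.toDual ℝ E).symm f
  have hw : ∀ v, inner ℝ w v = f v := fun v => InnerProductSpace.toDual_symm_apply
  have hnorm : ‖w‖ = ‖f‖ := LinearIsometryEquiv.norm_map _ _
  have h := b.hasSum_inner_mul_inner w w
  rw [real_inner_self_eq_norm_sq, hnorm] at h
  simpa only [real_inner_comm w (b _), hw, sq] using h

section BilinearForm

variable {V : Type*} [NormedAddCommGroup V] [InnerProductSpace ℝ V]
  (a : V →ₗ[ℝ] V →ₗ[ℝ] ℝ) (f : V →L[ℝ] ℝ) (w : V)

theorem opNorm_le_of_bilinear_bounded {M : ℝ} (hM : 0 ≤ M)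
    (hbdd : ∀ x y : V, |a x y| ≤ M * ‖x‖ * ‖y‖) (hf : ∀ v, f v = a w v) :
    ‖f‖ ≤ M * ‖w‖ :=
  f.opNorm_le_bound (by positivity) fun v => by
    rw [Real.norm_eq_abs, hf]
    exact hbdd w v

theorem mul_norm_le_opNorm_of_coercive {γ : ℝ} (hcoer : ∀ v : V, γ * ‖v‖ ^ 2 ≤ a v v)
    (hf : ∀ v, f v = a w v) : γ * ‖w‖ ≤ ‖f‖ := by
  rcases (norm_nonneg w).eq_or_lt with hw | hw
  · rw [← hw, mul_zero]
    exact norm_nonneg f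
  refine le_of_mul_le_mul_right ?_ hw
  calc γ * ‖w‖ * ‖w‖ = γ * ‖w‖ ^ 2 := by ring
    _ ≤ a w w := hcoer w
    _ = f w := (hf w).symm
    _ ≤ ‖f w‖ := Real.le_norm_self _
    _ ≤ ‖f‖ * ‖w‖ := f.le_opNorm w

end BilinearForm

/-- Equivalence of the truncated variational loss with the error: with `a`
bounded (M) and coercive (γ), `u*` the exact solution, `{φ_k}` an orthonormal
basis and `L_N(u) = Σ_{k<N} |a(u,φ_k) − ℓ(φ_k)|²`, one has
`L_N(u) ≤ M²‖u−u*‖²`, `L_N(u) → ‖R(u)‖²_{V*} ≥ γ²‖u−u*‖²`, and any sequence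
with vanishing residual norm converges to `u*`. -/
theorem stmt_10 {V : Type*} [NormedAddCommGroup V] [InnerProductSpace ℝ V]
    [CompleteSpace V]
    (a : V →ₗ[ℝ] V →ₗ[ℝ] ℝ) (M γ : ℝ) (hM : 0 < M) (hγ : 0 < γ)
    (hbdd : ∀ w v : V, |a w v| ≤ M * ‖w‖ * ‖v‖)
    (hcoer : ∀ v : V, γ * ‖v‖ ^ 2 ≤ a v v)
    (ℓ : V →L[ℝ] ℝ) (ustar : V) (hustar : ∀ v : V, a ustar v = ℓ v)
    (φ : HilbertBasis ℕ ℝ V)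
    (R : V → V →L[ℝ] ℝ) (hR : ∀ u v : V, R u v = a u v - ℓ v) :
    (∀ (u : V) (N : ℕ),
        ∑ k ∈ Finset.range N, |a u (φ k) - ℓ (φ k)| ^ 2 ≤ M ^ 2 * ‖u - ustar‖ ^ 2) ∧
    (∀ u : V,
        Tendsto (fun N => ∑ k ∈ Finset.range N, |a u (φ k) - ℓ (φ k)| ^ 2)
          atTop (nhds (‖R u‖ ^ 2)) ∧
        γ ^ 2 * ‖u - ustar‖ ^ 2 ≤ ‖R u‖ ^ 2) ∧
    (∀ um : ℕ → V, Tendsto (fun m => ‖R (um m)‖) atTop (nhds 0) →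
        Tendsto um atTop (nhds ustar)) := by
  have hres : ∀ u v, R u v = a (u - ustar) v := fun u v => by
    rw [hR, map_sub, LinearMap.sub_apply, hustar]
  have hparseval : ∀ u, HasSum (fun k => |a u (φ k) - ℓ (φ k)| ^ 2) (‖R u‖ ^ 2) := fun u => by
    simpa only [sq_abs, hR] using φ.hasSum_apply_sq (R u)
  have hupper : ∀ u, ‖R u‖ ≤ M * ‖u - ustar‖ := fun u =>
    opNorm_le_of_bilinear_bounded a (R u) (u - ustar) hM.le hbdd (hres u)
  have hlower : ∀ u, γ * ‖u - ustar‖ ≤ ‖R u‖ := fun u =>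
    mul_norm_le_opNorm_of_coercive a (R u) (u - ustar) hcoer (hres u)
  refine ⟨fun u N => ?_, fun u => ⟨(hparseval u).tendsto_sum_nat, ?_⟩, fun um hum => ?_⟩
  · calc ∑ k ∈ Finset.range N, |a u (φ k) - ℓ (φ k)| ^ 2
        ≤ ‖R u‖ ^ 2 := sum_le_hasSum _ (fun k _ => by positivity) (hparseval u)
      _ ≤ (M * ‖u - ustar‖) ^ 2 := by gcongr; exact hupper u
      _ = M ^ 2 * ‖u - ustar‖ ^ 2 := mul_pow _ _ _
  · rw [← mul_pow]
    gcongr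
    exact hlower u
  · rw [tendsto_iff_norm_sub_tendsto_zero]
    refine squeeze_zero (fun m => norm_nonneg _) (fun m => ?_) (by simpa using hum.const_mul γ⁻¹)
    rw [le_inv_mul_iff₀ hγ]
    exact hlower (um m)
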